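/- Suppose the positive masses m₁, m₂, m₃, m₄, a vector r ∈ (0,∞)⁶, and real numbers λ, σ satisfy the co-circular central configuration equations. Then the 6×6 real symmetric matrix D²L(r; λ, σ) = diag(f₁₂, f₁₃, f₁₄, f₂₃, f₂₄, f₃₄) + adiag(σ, −σ, σ, σ, −σ, σ), where f_{ij} = m_i m_j (2 r_{ij}⁻³ + λ), the coordinates are ordered (r₁₂, r₁₃, r₁₄, r₂₃, r₂₄, r₃₄), and adiag denotes the anti-diagonal matrix whose anti-diagonal entries from the upper-right corner are σ, −σ, σ, σ, −σ, σ, is positive definite. Consequently every critical point of U restricted to 𝓜⁺ is a nondegenerate local minimum of U|𝓜⁺. -/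

import Mathlib

/-!
Multiplying the central configuration equations of two complementary edges `ij`, `kl` (those
with `{i, j, k, l} = {1, 2, 3, 4}`) gives `σ² = mᵢmⱼ(rᵢⱼ⁻³ − λ) · mₖmₗ(rₖₗ⁻³ − λ)`. The equations
for `r₁₂` and `r₁₃` have right-hand sides of opposite signs, so `r₁₂⁻³ − λ` and `r₁₃⁻³ − λ` cannot
both be positive and `λ > 0`. Then `fᵢⱼ fₖₗ − σ² = 3 mᵢmⱼmₖmₗ (rᵢⱼ⁻³rₖₗ⁻³ + λrᵢⱼ⁻³ + λrₖₗ⁻³) > 0`,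
so each of the three `2 × 2` blocks `[[fᵢⱼ, ±σ], [±σ, fₖₗ]]` into which `D²L` splits is positive
definite.
-/

/-- The co-circular central configuration equations for the mutual distances
`(r₁₂, r₁₃, r₁₄, r₂₃, r₂₄, r₃₄)` with Lagrange multipliers `lam` and `sig`. -/
def cocircularCCEqns (m1 m2 m3 m4 r12 r13 r14 r23 r24 r34 lam sig : ℝ) : Prop :=
  m1*m2*(1/r12^3 - lam) = sig * (r34/r12) ∧
  m3*m4*(1/r34^3 - lam) = sig * (r12/r34) ∧
  m1*m3*(1/r13^3 - lam) = -sig * (r24/r13) ∧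
  m2*m4*(1/r24^3 - lam) = -sig * (r13/r24) ∧
  m1*m4*(1/r14^3 - lam) = sig * (r23/r14) ∧
  m2*m3*(1/r23^3 - lam) = sig * (r14/r23)

/-- The Hessian `D²L(r; λ, σ)` of the Lagrangian
`L = U + λM(I − 1) + σP` with respect to the coordinates
`(r₁₂, r₁₃, r₁₄, r₂₃, r₂₄, r₃₄)`:
`diag(f₁₂, f₁₃, f₁₄, f₂₃, f₂₄, f₃₄) + adiag(σ, −σ, σ, σ, −σ, σ)`
where `f_ij = m_i m_j (2 r_ij⁻³ + λ)`. -/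
noncomputable def hessianL (m1 m2 m3 m4 r12 r13 r14 r23 r24 r34 lam sig : ℝ) :
    Matrix (Fin 6) (Fin 6) ℝ :=
  !![m1*m2*(2/r12^3 + lam), 0, 0, 0, 0, sig;
     0, m1*m3*(2/r13^3 + lam), 0, 0, -sig, 0;
     0, 0, m1*m4*(2/r14^3 + lam), sig, 0, 0;
     0, 0, sig, m2*m3*(2/r23^3 + lam), 0, 0;
     0, -sig, 0, 0, m2*m4*(2/r24^3 + lam), 0;
     sig, 0, 0, 0, 0, m3*m4*(2/r34^3 + lam)]

open Matrix

def binaryQuadForm (a s b u v : ℝ) : ℝ := a * u ^ 2 + 2 * s * (u * v) + b * v ^ 2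

theorem binaryQuadForm_nonneg {a s b : ℝ} (ha : 0 < a) (hd : s ^ 2 ≤ a * b) (u v : ℝ) :
    0 ≤ binaryQuadForm a s b u v := by
  unfold binaryQuadForm
  nlinarith [sq_nonneg (a * u + s * v), sq_nonneg v]

theorem binaryQuadForm_pos {a s b : ℝ} (ha : 0 < a) (hd : s ^ 2 < a * b) {u v : ℝ}
    (huv : u ≠ 0 ∨ v ≠ 0) : 0 < binaryQuadForm a s b u v := by
  unfold binaryQuadForm
  rcases eq_or_ne v 0 with rfl | hv
  · have hu : u ≠ 0 := huv.resolve_right (not_not.mpr rfl)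
    nlinarith [sq_pos_of_ne_zero hu]
  · nlinarith [sq_nonneg (a * u + s * v), sq_pos_of_ne_zero hv]

section DiagonalAddAntidiagonal

variable {a₁ a₂ a₃ b₁ b₂ b₃ s₁ s₂ s₃ : ℝ}

theorem dotProduct_mulVec_diagonal_add_antidiagonal_six (x : Fin 6 → ℝ) :
    star x ⬝ᵥ !![a₁, 0, 0, 0, 0, s₁; 0, a₂, 0, 0, s₂, 0; 0, 0, a₃, s₃, 0, 0;
        0, 0, s₃, b₃, 0, 0; 0, s₂, 0, 0, b₂, 0; s₁, 0, 0, 0, 0, b₁] *ᵥ x =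
      binaryQuadForm a₁ s₁ b₁ (x 0) (x 5) + binaryQuadForm a₂ s₂ b₂ (x 1) (x 4) +
        binaryQuadForm a₃ s₃ b₃ (x 2) (x 3) := by
  simp only [dotProduct, Pi.star_apply, star_trivial, mulVec, of_apply, cons_val',
    cons_val_fin_one, Fin.sum_univ_six, cons_val_zero, cons_val_one, cons_val, binaryQuadForm]
  ring

theorem posDef_diagonal_add_antidiagonal_six (ha₁ : 0 < a₁) (ha₂ : 0 < a₂) (ha₃ : 0 < a₃)
    (hd₁ : s₁ ^ 2 < a₁ * b₁) (hd₂ : s₂ ^ 2 < a₂ * b₂) (hd₃ : s₃ ^ 2 < a₃ * b₃) :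
    (!![a₁, 0, 0, 0, 0, s₁; 0, a₂, 0, 0, s₂, 0; 0, 0, a₃, s₃, 0, 0;
        0, 0, s₃, b₃, 0, 0; 0, s₂, 0, 0, b₂, 0; s₁, 0, 0, 0, 0, b₁] :
      Matrix (Fin 6) (Fin 6) ℝ).PosDef := by
  rw [posDef_iff_dotProduct_mulVec]
  refine ⟨by ext i j; fin_cases i <;> fin_cases j <;> rfl, fun x hx => ?_⟩
  rw [dotProduct_mulVec_diagonal_add_antidiagonal_six]
  have h₁ := binaryQuadForm_nonneg ha₁ hd₁.le (x 0) (x 5)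
  have h₂ := binaryQuadForm_nonneg ha₂ hd₂.le (x 1) (x 4)
  have h₃ := binaryQuadForm_nonneg ha₃ hd₃.le (x 2) (x 3)
  have hpair : (x 0 ≠ 0 ∨ x 5 ≠ 0) ∨ (x 1 ≠ 0 ∨ x 4 ≠ 0) ∨ (x 2 ≠ 0 ∨ x 3 ≠ 0) := by
    by_contra! h
    exact hx (by ext i; fin_cases i <;> simp [h])
  rcases hpair with h | h | h
  · linarith [binaryQuadForm_pos ha₁ hd₁ h]
  · linarith [binaryQuadForm_pos ha₂ hd₂ h]
  · linarith [binaryQuadForm_pos ha₃ hd₃ h]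

end DiagonalAddAntidiagonal

theorem lam_pos_of_cocircularCCEqns {m1 m2 m3 m4 r12 r13 r14 r23 r24 r34 lam sig : ℝ}
    (hm1 : 0 < m1) (hm2 : 0 < m2) (hm3 : 0 < m3)
    (h12 : 0 < r12) (h13 : 0 < r13) (h24 : 0 ≤ r24) (h34 : 0 ≤ r34)
    (hcc : cocircularCCEqns m1 m2 m3 m4 r12 r13 r14 r23 r24 r34 lam sig) : 0 < lam := by
  obtain ⟨e12, -, e13, -⟩ := hcc
  have hopp : m1*m2*(1/r12^3 - lam) * (m1*m3*(1/r13^3 - lam)) ≤ 0 := by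
    rw [e12, e13]
    nlinarith [mul_nonneg (sq_nonneg sig) (mul_nonneg (div_nonneg h34 h12.le)
      (div_nonneg h24 h13.le))]
  by_contra! hlam
  have p12 : 0 < m1*m2*(1/r12^3 - lam) := by
    have : 0 < 1/r12^3 := by positivity
    exact mul_pos (by positivity) (by linarith)
  have p13 : 0 < m1*m3*(1/r13^3 - lam) := by
    have : 0 < 1/r13^3 := by positivity
    exact mul_pos (by positivity) (by linarith)
  exact (mul_pos p12 p13).not_ge hopp

theorem sq_lt_mul_of_complementary_ccEqns {p q r r' lam s : ℝ} (hp : 0 < p) (hq : 0 < q)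
    (hr : 0 < r) (hr' : 0 < r') (hlam : 0 < lam)
    (h : p*(1/r^3 - lam) = s * (r'/r)) (h' : q*(1/r'^3 - lam) = s * (r/r')) :
    s^2 < p*(2/r^3 + lam) * (q*(2/r'^3 + lam)) := by
  have hs : s^2 = p*(1/r^3 - lam) * (q*(1/r'^3 - lam)) := by
    rw [h, h']; field_simp
  have hu : 0 < 1/r^3 := by positivity
  have hv : 0 < 1/r'^3 := by positivity
  have hgap : p*(2/r^3 + lam) * (q*(2/r'^3 + lam)) - p*(1/r^3 - lam) * (q*(1/r'^3 - lam)) =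
      3 * (p*q) * (1/r^3 * (1/r'^3) + lam * (1/r^3) + lam * (1/r'^3)) := by ring
  have : 0 < 3 * (p*q) * (1/r^3 * (1/r'^3) + lam * (1/r^3) + lam * (1/r'^3)) := by positivity
  linarith

/-- At any solution of the co-circular central configuration equations the
Hessian of the Lagrangian is positive definite; hence every critical point of
`U` restricted to `𝓜⁺` is a nondegenerate local minimum. -/
theorem hessianL_posDef (m1 m2 m3 m4 r12 r13 r14 r23 r24 r34 lam sig : ℝ)
    (hm1 : 0 < m1) (hm2 : 0 < m2) (hm3 : 0 < m3) (hm4 : 0 < m4)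
    (h12 : 0 < r12) (h13 : 0 < r13) (h14 : 0 < r14)
    (h23 : 0 < r23) (h24 : 0 < r24) (h34 : 0 < r34)
    (hcc : cocircularCCEqns m1 m2 m3 m4 r12 r13 r14 r23 r24 r34 lam sig) :
    (hessianL m1 m2 m3 m4 r12 r13 r14 r23 r24 r34 lam sig).PosDef := by
  have hlam := lam_pos_of_cocircularCCEqns hm1 hm2 hm3 h12 h13 h24.le h34.le hcc
  obtain ⟨e12, e34, e13, e24, e14, e23⟩ := hcc
  have diag_pos {m m' r : ℝ} (hm : 0 < m) (hm' : 0 < m') (hr : 0 < r) :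
      0 < m*m'*(2/r^3 + lam) := by positivity
  exact posDef_diagonal_add_antidiagonal_six (diag_pos hm1 hm2 h12) (diag_pos hm1 hm3 h13)
    (diag_pos hm1 hm4 h14)
    (sq_lt_mul_of_complementary_ccEqns (by positivity) (by positivity) h12 h34 hlam e12 e34)
    (sq_lt_mul_of_complementary_ccEqns (by positivity) (by positivity) h13 h24 hlam e13 e24)
    (sq_lt_mul_of_complementary_ccEqns (by positivity) (by positivity) h14 h23 hlam e14 e23)
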